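/- Let ρ and σ be density matrices on ℂ^n, let α > 1, and let Φ be a (not necessarily completely) positive, trace-preserving linear map from n×n complex matrices to m×m complex matrices. Then the data-processing inequality holds: H_α(Φ(ρ)‖Φ(σ)) ≤ H_α(ρ‖σ). -/

import Mathlib

/-!
The trace dual `Φ†` of `Φ`, defined by `Tr[Φ†(E) A] = Tr[E Φ(A)]`, is positive because `Φ` is, and
unital because `Φ` is trace-preserving. Hence `Φ†` maps every effect `α⁻¹ ≤ E ≤ 1` on `ℂ^m` to an
effect on `ℂ^n` with `Tr[Φ†(E) ρ] / Tr[Φ†(E) σ] = Tr[E Φ(ρ)] / Tr[E Φ(σ)]`, so the ratios defining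
`sup_α(Φ(ρ)/Φ(σ))` are among those defining `sup_α(ρ/σ)`. Both suprema are at least `1` (take
`E = 1`) and at most `α`, and `log₂` is monotone.
-/

open scoped ComplexOrder

/-- `sup_α(ρ/σ) = sup { Tr[Eρ]/Tr[Eσ] : α⁻¹·𝟙 ≤ E ≤ 𝟙 }`. -/
noncomputable def supAlpha {n : ℕ} (α : ℝ) (ρ σ : Matrix (Fin n) (Fin n) ℂ) : ℝ :=
  sSup { x : ℝ | ∃ E : Matrix (Fin n) (Fin n) ℂ,
    (E - ((α⁻¹ : ℝ) : ℂ) • (1 : Matrix (Fin n) (Fin n) ℂ)).PosSemidef ∧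
    ((1 : Matrix (Fin n) (Fin n) ℂ) - E).PosSemidef ∧
    x = ((E * ρ).trace.re) / ((E * σ).trace.re) }

/-- The Hilbert α-divergence `H_α(ρ‖σ) = (α/(α-1))·log₂ sup_α(ρ/σ)`. -/
noncomputable def HAlpha {n : ℕ} (α : ℝ) (ρ σ : Matrix (Fin n) (Fin n) ℂ) : ℝ :=
  (α / (α - 1)) * Real.logb 2 (supAlpha α ρ σ)

namespace Matrix

variable {ι κ R : Type*} [Fintype ι] [Fintype κ]

/-- Over `ℂ` a matrix with nonnegative quadratic form is automatically Hermitian, by polarization. -/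
theorem posSemidef_of_forall_dotProduct_mulVec_nonneg {A : Matrix ι ι ℂ}
    (h : ∀ x, 0 ≤ star x ⬝ᵥ A *ᵥ x) : A.PosSemidef := by
  classical
  rw [← isPositive_toEuclideanLin_iff, LinearMap.isPositive_iff_complex]
  intro x
  have hx := h x
  simp_rw [EuclideanSpace.inner_eq_star_dotProduct, ofLp_toLpLin, toLin'_apply]
  rw [dotProduct_star, dotProduct_comm, (IsSelfAdjoint.of_nonneg hx).star_eq,
    RCLike.re_to_complex]
  exact ⟨Complex.conj_eq_iff_re.mp (IsSelfAdjoint.of_nonneg hx).star_eq, (Complex.le_def.mp hx).1⟩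

theorem PosSemidef.trace_mul_nonneg {A B : Matrix ι ι ℂ} (hA : A.PosSemidef)
    (hB : B.PosSemidef) : 0 ≤ (A * B).trace := by
  classical
  open scoped MatrixOrder in
  obtain ⟨C, rfl⟩ := CStarAlgebra.nonneg_iff_eq_star_mul_self.mp hA.nonneg
  rw [Matrix.mul_assoc, trace_mul_comm]
  exact (hB.mul_mul_conjTranspose_same C).trace_nonneg

theorem trace_mul_le_trace_mul_of_posSemidef_sub {E F τ : Matrix ι ι ℂ}
    (hEF : (F - E).PosSemidef) (hτ : τ.PosSemidef) : (E * τ).trace ≤ (F * τ).trace := by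
  simpa only [Matrix.sub_mul, trace_sub, sub_nonneg] using hEF.trace_mul_nonneg hτ

theorem dotProduct_mulVec_eq_trace_mul_vecMulVec [CommSemiring R] [StarRing R]
    (A : Matrix ι ι R) (x : ι → R) : star x ⬝ᵥ A *ᵥ x = (A * vecMulVec x (star x)).trace := by
  rw [mul_vecMulVec, trace_vecMulVec, dotProduct_comm]

section traceDual

variable [DecidableEq ι] [CommSemiring R]

/-- The adjoint of `Φ` for the pairing `(E, A) ↦ Tr[E A]`. -/
def traceDual (Φ : Matrix ι ι R →ₗ[R] Matrix κ κ R) : Matrix κ κ R →ₗ[R] Matrix ι ι R where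
  toFun E := of fun i j => (E * Φ (single j i 1)).trace
  map_add' E F := by ext; simp [Matrix.add_mul]
  map_smul' c E := by ext; simp [Matrix.smul_mul]

theorem trace_traceDual_mul (Φ : Matrix ι ι R →ₗ[R] Matrix κ κ R) (E : Matrix κ κ R)
    (A : Matrix ι ι R) : (traceDual Φ E * A).trace = (E * Φ A).trace := by
  conv_rhs => rw [matrix_eq_sum_single A]
  conv_lhs => rw [matrix_eq_sum_single A]
  simp only [Matrix.mul_sum, map_sum, trace_sum, trace_mul_single]
  refine Finset.sum_congr rfl fun p _ => Finset.sum_congr rfl fun q _ => ?_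
  rw [show single p q (A p q) = A p q • single p q 1 by simp, map_smul, Matrix.mul_smul,
    trace_smul]
  simp [traceDual, mul_comm]

theorem traceDual_one [DecidableEq κ] {Φ : Matrix ι ι R →ₗ[R] Matrix κ κ R}
    (hΦ : ∀ A, (Φ A).trace = A.trace) : traceDual Φ 1 = 1 :=
  ext_iff_trace_mul_right.mpr fun A => by
    rw [trace_traceDual_mul, Matrix.one_mul, Matrix.one_mul, hΦ]

theorem PosSemidef.traceDual {Φ : Matrix ι ι ℂ →ₗ[ℂ] Matrix κ κ ℂ}
    (hΦ : ∀ A, A.PosSemidef → (Φ A).PosSemidef) {E : Matrix κ κ ℂ} (hE : E.PosSemidef) :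
    (traceDual Φ E).PosSemidef :=
  posSemidef_of_forall_dotProduct_mulVec_nonneg fun x => by
    rw [dotProduct_mulVec_eq_trace_mul_vecMulVec, trace_traceDual_mul]
    exact hE.trace_mul_nonneg (hΦ _ (posSemidef_vecMulVec_self_star x))

end traceDual

end Matrix

open Matrix

section effectRatios

variable {ι κ : Type*} [Fintype ι] [DecidableEq ι] [Fintype κ] [DecidableEq κ]

def effectRatios (α : ℝ) (ρ σ : Matrix ι ι ℂ) : Set ℝ :=
  { x : ℝ | ∃ E : Matrix ι ι ℂ,
    (E - ((α⁻¹ : ℝ) : ℂ) • (1 : Matrix ι ι ℂ)).PosSemidef ∧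
    ((1 : Matrix ι ι ℂ) - E).PosSemidef ∧
    x = ((E * ρ).trace.re) / ((E * σ).trace.re) }

theorem supAlpha_eq_sSup_effectRatios {n : ℕ} (α : ℝ) (ρ σ : Matrix (Fin n) (Fin n) ℂ) :
    supAlpha α ρ σ = sSup (effectRatios α ρ σ) :=
  rfl

theorem effectRatios_subset_Iic {α : ℝ} (hα : 0 < α) {ρ σ : Matrix ι ι ℂ} (hρ : ρ.PosSemidef)
    (hρtr : ρ.trace = 1) (hσ : σ.PosSemidef) (hσtr : σ.trace = 1) :
    effectRatios α ρ σ ⊆ Set.Iic α := by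
  rintro _ ⟨E, hE₁, hE₂, rfl⟩
  have hρE : (E * ρ).trace.re ≤ 1 := by
    simpa [hρtr] using (Complex.le_def.mp (trace_mul_le_trace_mul_of_posSemidef_sub hE₂ hρ)).1
  have hσE : α⁻¹ ≤ (E * σ).trace.re := by
    simpa [Matrix.smul_mul, hσtr] using
      (Complex.le_def.mp (trace_mul_le_trace_mul_of_posSemidef_sub hE₁ hσ)).1
  rw [Set.mem_Iic, div_le_iff₀ ((inv_pos.mpr hα).trans_le hσE)]
  calc (E * ρ).trace.re ≤ α * α⁻¹ := by rwa [mul_inv_cancel₀ hα.ne']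
    _ ≤ α * (E * σ).trace.re := by gcongr

theorem one_mem_effectRatios {α : ℝ} (hα : 1 ≤ α) {ρ σ : Matrix ι ι ℂ} (hρtr : ρ.trace = 1)
    (hσtr : σ.trace = 1) : 1 ∈ effectRatios α ρ σ := by
  refine ⟨1, ?_, by simpa using PosSemidef.zero, by simp [hρtr, hσtr]⟩
  have hα' : (0 : ℂ) ≤ ((1 - α⁻¹ : ℝ) : ℂ) :=
    Complex.zero_le_real.mpr (sub_nonneg.mpr (inv_le_one_of_one_le₀ hα))
  rw [show (1 : Matrix ι ι ℂ) - ((α⁻¹ : ℝ) : ℂ) • 1 = ((1 - α⁻¹ : ℝ) : ℂ) • 1 by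
    rw [Complex.ofReal_sub, Complex.ofReal_one, sub_smul, one_smul]]
  exact PosSemidef.one.smul hα'

theorem effectRatios_map_subset (α : ℝ) (ρ σ : Matrix ι ι ℂ)
    {Φ : Matrix ι ι ℂ →ₗ[ℂ] Matrix κ κ ℂ} (hΦpos : ∀ A, A.PosSemidef → (Φ A).PosSemidef)
    (hΦtr : ∀ A, (Φ A).trace = A.trace) :
    effectRatios α (Φ ρ) (Φ σ) ⊆ effectRatios α ρ σ := by
  rintro _ ⟨E, hE₁, hE₂, rfl⟩
  refine ⟨traceDual Φ E, ?_, ?_, by rw [trace_traceDual_mul, trace_traceDual_mul]⟩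
  · simpa [traceDual_one hΦtr] using hE₁.traceDual hΦpos
  · simpa [traceDual_one hΦtr] using hE₂.traceDual hΦpos

end effectRatios

theorem supAlpha_map_le {n m : ℕ} {α : ℝ} (hα : 1 ≤ α) {ρ σ : Matrix (Fin n) (Fin n) ℂ}
    (hρ : ρ.PosSemidef) (hρtr : ρ.trace = 1) (hσ : σ.PosSemidef) (hσtr : σ.trace = 1)
    {Φ : Matrix (Fin n) (Fin n) ℂ →ₗ[ℂ] Matrix (Fin m) (Fin m) ℂ}
    (hΦpos : ∀ A, A.PosSemidef → (Φ A).PosSemidef) (hΦtr : ∀ A, (Φ A).trace = A.trace) :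
    supAlpha α (Φ ρ) (Φ σ) ≤ supAlpha α ρ σ := by
  rw [supAlpha_eq_sSup_effectRatios, supAlpha_eq_sSup_effectRatios]
  exact csSup_le_csSup ⟨α, effectRatios_subset_Iic (by positivity) hρ hρtr hσ hσtr⟩
    ⟨1, one_mem_effectRatios hα ((hΦtr ρ).trans hρtr) ((hΦtr σ).trans hσtr)⟩
    (effectRatios_map_subset α ρ σ hΦpos hΦtr)

theorem one_le_supAlpha {n : ℕ} {α : ℝ} (hα : 1 ≤ α) {ρ σ : Matrix (Fin n) (Fin n) ℂ}
    (hρ : ρ.PosSemidef) (hρtr : ρ.trace = 1) (hσ : σ.PosSemidef) (hσtr : σ.trace = 1) :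
    1 ≤ supAlpha α ρ σ := by
  rw [supAlpha_eq_sSup_effectRatios]
  exact le_csSup ⟨α, effectRatios_subset_Iic (by positivity) hρ hρtr hσ hσtr⟩
    (one_mem_effectRatios hα hρtr hσtr)

/-- Data-processing inequality for the Hilbert α-divergences: for density matrices
`ρ, σ` on `ℂ^n`, `α > 1`, and any positive (not necessarily completely positive)
trace-preserving linear map `Φ`, we have `H_α(Φ(ρ)‖Φ(σ)) ≤ H_α(ρ‖σ)`. -/
theorem hilbert_alpha_divergence_data_processing
    {n m : ℕ} (ρ σ : Matrix (Fin n) (Fin n) ℂ)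
    (hρ : ρ.PosSemidef) (hρtr : ρ.trace = 1)
    (hσ : σ.PosSemidef) (hσtr : σ.trace = 1)
    (Φ : Matrix (Fin n) (Fin n) ℂ →ₗ[ℂ] Matrix (Fin m) (Fin m) ℂ)
    (hΦpos : ∀ A : Matrix (Fin n) (Fin n) ℂ, A.PosSemidef → (Φ A).PosSemidef)
    (hΦtr : ∀ A : Matrix (Fin n) (Fin n) ℂ, (Φ A).trace = A.trace)
    (α : ℝ) (hα : 1 < α) :
    HAlpha α (Φ ρ) (Φ σ) ≤ HAlpha α ρ σ := by
  have hsup_pos : 0 < supAlpha α (Φ ρ) (Φ σ) :=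
    one_pos.trans_le <| one_le_supAlpha hα.le (hΦpos ρ hρ) ((hΦtr ρ).trans hρtr)
      (hΦpos σ hσ) ((hΦtr σ).trans hσtr)
  have hcoeff : 0 ≤ α / (α - 1) := div_nonneg (by positivity) (sub_nonneg.mpr hα.le)
  exact mul_le_mul_of_nonneg_left (Real.logb_le_logb_of_le one_lt_two hsup_pos
    (supAlpha_map_le hα.le hρ hρtr hσ hσtr hΦpos hΦtr)) hcoeff
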